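/- Under the setup of the quantile peer effects game (each agent i with a nonempty peer set, quantile levels T ⊂ [0,1] finite, coefficients λ_τ with ∑_{τ∈T} |λ_τ| < 1, types α_i ∈ R, and best responses BR_i(y) = (1 - λ_2)α_i + ∑_{τ∈T} λ_τ q_{τ,i}(y_{-i}) where λ_2 ∈ R is fixed), there exists a unique vector y* ∈ R^n with y*_i = BR_i(y*) for all i; i.e., the game has a unique pure-strategy Nash equilibrium. -/

import Mathlib

/-!
Raising every outcome by at most `c` raises every order statistic of the peers' outcomes by at
most `c`: the `k`-th smallest value is at most `v` iff at least `k + 1` values are at most `v`, and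
these counts only grow when values decrease. So order statistics, and the Type-7 quantiles, which
are convex combinations of two of them, are 1-Lipschitz for the sup norm. The best-response map is
then Lipschitz with constant `∑ τ ∈ T, |λ τ| < 1` on the complete space `Fin n → ℝ`, and the Banach
fixed point theorem gives a unique equilibrium.
-/

/-- The `k`-th smallest (0-indexed) outcome among the peers in `P` under outcome vector `y`. -/
noncomputable def orderStat {n : ℕ} (P : Finset (Fin n)) (y : Fin n → ℝ) (k : ℕ) : ℝ :=
  ((P.val.map y).sort (· ≤ ·)).getD k 0

/-- The Type-7 sample τ-quantile of the outcomes of the peers in `P`: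
`(1-ω) y_{(π)} + ω y_{(π+1)}` with `π = ⌊τ(d-1)⌋ + 1` (1-based; here 0-based `⌊τ(d-1)⌋`)
and `ω = τ(d-1) - ⌊τ(d-1)⌋`. -/
noncomputable def quantile7 {n : ℕ} (P : Finset (Fin n)) (y : Fin n → ℝ) (τ : ℝ) : ℝ :=
  let h : ℝ := τ * ((P.card : ℝ) - 1)
  (1 - (h - ⌊h⌋)) * orderStat P y ⌊h⌋.toNat + (h - ⌊h⌋) * orderStat P y (⌊h⌋.toNat + 1)

open Finset

namespace List

variable {α : Type*} [LinearOrder α] {l : List α}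

theorem SortedLE.lt_countP_le_getElem (hl : l.SortedLE) {k : ℕ} (hk : k < l.length) :
    k < l.countP (· ≤ l[k]) := by
  have htake : (l.take (k + 1)).countP (· ≤ l[k]) = k + 1 := by
    rw [countP_eq_length.2, length_take]
    · omega
    · intro x hx
      obtain ⟨j, hj, rfl⟩ := mem_iff_getElem.1 hx
      simp only [length_take] at hj
      simpa using hl.getElem_le_getElem_of_le (by omega : j ≤ k)
  exact lt_of_lt_of_le (by omega) (take_sublist (k + 1) l).countP_le

theorem SortedLE.getElem_le_of_lt_countP (hl : l.SortedLE) {k : ℕ} (hk : k < l.length) {v : α}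
    (hv : k < l.countP (· ≤ v)) : l[k] ≤ v := by
  by_contra! hlt
  have hdrop : (l.drop k).countP (· ≤ v) = 0 := by
    refine countP_eq_zero.2 fun x hx => ?_
    obtain ⟨j, hj, rfl⟩ := mem_iff_getElem.1 hx
    simpa [getElem_drop] using hlt.trans_le (hl.getElem_le_getElem_of_le (by omega : k ≤ k + j))
  have : l.countP (· ≤ v) ≤ k := by
    rw [← take_append_drop k l, countP_append, hdrop, add_zero]
    exact countP_le_length.trans (length_take_le _ _)
  omega

end List

namespace Multiset

variable {ι α : Type*} [LinearOrder α]

theorem getD_sort_map_le_of_le {s : Multiset ι} {f g : ι → α} (hfg : ∀ i ∈ s, f i ≤ g i)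
    (k : ℕ) (d : α) :
    ((s.map f).sort (· ≤ ·)).getD k d ≤ ((s.map g).sort (· ≤ ·)).getD k d := by
  have hlen : ((s.map f).sort (· ≤ ·)).length = ((s.map g).sort (· ≤ ·)).length := by
    simp only [length_sort, card_map]
  by_cases hk : k < ((s.map f).sort (· ≤ ·)).length
  swap
  · rw [List.getD_eq_default _ _ (by omega), List.getD_eq_default _ _ (by omega)]
  rw [List.getD_eq_getElem _ _ hk, List.getD_eq_getElem _ _ (hlen ▸ hk)]
  set v := ((s.map g).sort (· ≤ ·))[k]
  have hg : k < (s.map g).countP (· ≤ v) := by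
    simpa only [← coe_countP, sort_eq] using
      ((s.map g).pairwise_sort (· ≤ ·)).sortedLE.lt_countP_le_getElem (hlen ▸ hk)
  have hgf : (s.map g).countP (· ≤ v) ≤ (s.map f).countP (· ≤ v) := by
    rw [countP_map, countP_map]
    refine card_le_card (le_filter.2 ⟨filter_le _ _, fun i hi => ?_⟩)
    obtain ⟨his, hgi⟩ := mem_filter.1 hi
    exact (hfg i his).trans hgi
  refine (pairwise_sort _ _).sortedLE.getElem_le_of_lt_countP hk ?_
  simpa only [← coe_countP, sort_eq] using hg.trans_le hgf

theorem sort_map_add_const [AddCommGroup α] [IsOrderedAddMonoid α] (s : Multiset ι) (f : ι → α)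
    (c : α) :
    (s.map (f · + c)).sort (· ≤ ·) = ((s.map f).sort (· ≤ ·)).map (· + c) := by
  rw [map_sort (· + c) (s.map f) (· ≤ ·) (· ≤ ·) fun a _ b _ => (add_le_add_iff_right c).symm,
    map_map]
  rfl

end Multiset

theorem LipschitzWith.finset_sum {ι α E : Type*} [PseudoEMetricSpace α] [SeminormedAddCommGroup E]
    {s : Finset ι} {K : ι → NNReal} {f : ι → α → E} (hf : ∀ i ∈ s, LipschitzWith (K i) (f i)) :
    LipschitzWith (∑ i ∈ s, K i) fun x => ∑ i ∈ s, f i x := by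
  classical
  induction s using Finset.induction_on with
  | empty => simpa using LipschitzWith.const (0 : E)
  | insert i s hi ih =>
    simp only [sum_insert hi]
    exact (hf i (mem_insert_self i s)).add (ih fun j hj => hf j (mem_insert_of_mem hj))

theorem LipschitzWith.pi {ι α : Type*} {β : ι → Type*} [Fintype ι]
    [PseudoEMetricSpace α] [∀ i, PseudoEMetricSpace (β i)] {K : NNReal} {f : α → ∀ i, β i}
    (hf : ∀ i, LipschitzWith K fun x => f x i) : LipschitzWith K f :=
  fun x y => edist_pi_le_iff.2 fun i => hf i x y

section orderStat

variable {n : ℕ} (P : Finset (Fin n))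

theorem orderStat_mono {y z : Fin n → ℝ} (h : ∀ i ∈ P, y i ≤ z i) (k : ℕ) :
    orderStat P y k ≤ orderStat P z k :=
  Multiset.getD_sort_map_le_of_le h k 0

theorem orderStat_add_const (y : Fin n → ℝ) (c : ℝ) {k : ℕ} (hk : k < #P) :
    orderStat P (y · + c) k = orderStat P y k + c := by
  have hlen : k < ((P.val.map y).sort (· ≤ ·)).length := by simpa using hk
  rw [orderStat, orderStat, Multiset.sort_map_add_const,
    List.getD_eq_getElem _ _ (by simpa using hlen), List.getElem_map, List.getD_eq_getElem _ _ hlen]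

theorem orderStat_le_add {y z : Fin n → ℝ} {c : ℝ} (hc : 0 ≤ c) (h : ∀ i ∈ P, y i ≤ z i + c)
    (k : ℕ) : orderStat P y k ≤ orderStat P z k + c := by
  by_cases hk : k < #P
  · exact orderStat_add_const P z c hk ▸ orderStat_mono P h k
  · have hlen : ∀ y : Fin n → ℝ, ((P.val.map y).sort (· ≤ ·)).length ≤ k := by simpa using hk
    rw [orderStat, orderStat, List.getD_eq_default _ _ (hlen y), List.getD_eq_default _ _ (hlen z),
      zero_add]
    exact hc

theorem lipschitzWith_orderStat (k : ℕ) : LipschitzWith 1 (orderStat P · k) :=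
  LipschitzWith.of_le_add fun y z =>
    orderStat_le_add P dist_nonneg (fun i _ => by
      linarith [Real.sub_le_dist (y i) (z i), dist_le_pi_dist y z i]) k

theorem lipschitzWith_quantile7 (τ : ℝ) : LipschitzWith 1 (quantile7 P · τ) := by
  set h : ℝ := τ * ((#P : ℝ) - 1)
  have hω : h - ⌊h⌋ = Int.fract h := rfl
  have hK : ‖1 - Int.fract h‖₊ * 1 + ‖Int.fract h‖₊ * 1 = 1 := by
    ext
    simp [abs_of_nonneg (Int.fract_nonneg h), abs_of_nonneg (sub_nonneg.2 (Int.fract_lt_one h).le)]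
  have := ((lipschitzWith_smul (1 - Int.fract h)).comp (lipschitzWith_orderStat P ⌊h⌋.toNat)).add
    ((lipschitzWith_smul (Int.fract h)).comp (lipschitzWith_orderStat P (⌊h⌋.toNat + 1)))
  rw [hK] at this
  simpa [quantile7, hω] using this

end orderStat

theorem nash_equilibrium_exists_unique_general {n : ℕ} (peers : Fin n → Finset (Fin n))
    (T : Finset ℝ)
    (lam : ℝ → ℝ) (hlam : ∑ τ ∈ T, |lam τ| < 1)
    (α : Fin n → ℝ) (lambda2 : ℝ) (BR : (Fin n → ℝ) → Fin n → ℝ)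
    (hBR : ∀ y i, BR y i = (1 - lambda2) * α i + ∑ τ ∈ T, lam τ * quantile7 (peers i) y τ) :
    ∃! ystar : Fin n → ℝ, ∀ i, ystar i = BR ystar i := by
  have hlip : LipschitzWith (∑ τ ∈ T, ‖lam τ‖₊) BR := by
    refine LipschitzWith.pi fun i => ?_
    have hsum := LipschitzWith.finset_sum fun τ (_ : τ ∈ T) =>
      (lipschitzWith_smul (lam τ)).comp (lipschitzWith_quantile7 (peers i) τ)
    simpa [hBR] using (LipschitzWith.const ((1 - lambda2) * α i)).add hsum
  have hcontr : ContractingWith (∑ τ ∈ T, ‖lam τ‖₊) BR :=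
    ⟨by rw [← NNReal.coe_lt_coe]; simpa using hlam, hlip⟩
  exact ⟨_, fun i => (congrFun hcontr.fixedPoint_isFixedPt i).symm,
    fun y hy => hcontr.fixedPoint_unique (funext fun i => (hy i).symm)⟩

/-- the quantile peer-effects game has a unique pure-strategy Nash equilibrium. -/
theorem nash_equilibrium_exists_unique {n : ℕ} (peers : Fin n → Finset (Fin n))
    (hpeers : ∀ i, (peers i).Nonempty)
    (T : Finset ℝ) (hT : ∀ τ ∈ T, τ ∈ Set.Icc (0 : ℝ) 1)
    (lam : ℝ → ℝ) (hlam : ∑ τ ∈ T, |lam τ| < 1)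
    (α : Fin n → ℝ) (lambda2 : ℝ) (BR : (Fin n → ℝ) → Fin n → ℝ)
    (hBR : ∀ y i, BR y i = (1 - lambda2) * α i + ∑ τ ∈ T, lam τ * quantile7 (peers i) y τ) :
    ∃! ystar : Fin n → ℝ, ∀ i, ystar i = BR ystar i :=
  nash_equilibrium_exists_unique_general peers T lam hlam α lambda2 BR hBR
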